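/- For every a ∈ ℝ^m (that is, a ∈ ℂ^m with all coordinates real), the number −i·C(a) is real; equivalently, C(a) is purely imaginary. -/

import Mathlib

/-!
`X ↦ conj (Φ₀ (conj X, c))` solves `(★ conj c)` and has the same asymptotics as `Φ₀ (·, conj c)`
along the positive real axis. Both decay superexponentially there, so their Wronskian, being
constant, vanishes; since their ratio tends to `1`, they coincide. For real `a` this symmetry
exchanges `Φ₁` and `Φ₋₁`, so conjugating the Stokes relation `Φ₋₁ = C Φ₀ + Φ₁` gives
`Φ₁ = conj C · Φ₀ + Φ₋₁`. Adding the two yields `(C + conj C) Φ₀ = 0`, and `Φ₀ (·, a) ≢ 0`.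
-/

open Complex Filter Real

noncomputable section

/-- The point `r e^{iθ}` in the complex plane. -/
def rayPt (r θ : ℝ) : ℂ := (r : ℂ) * Complex.exp (θ * Complex.I)

/-- The branch `X^s := exp(s(log r + iθ))` for `X = r e^{iθ}`. -/
def rayPow (r θ : ℝ) (s : ℂ) : ℂ := Complex.exp (s * ((Real.log r : ℂ) + θ * Complex.I))

/-- `ω := exp(2πi/(m+2))`. -/
def om (m : ℕ) : ℂ := Complex.exp (2 * Real.pi * Complex.I / (m + 2))

/-- `ω^s := exp((2πi/(m+2)) s)`. -/
def omPow (m : ℕ) (s : ℂ) : ℂ := Complex.exp ((2 * Real.pi * Complex.I / (m + 2)) * s)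

/-- The coefficients `b_n(a)` of the formal square root of `1 + a₁ x + ⋯ + a_m x^m`:
`b₀ = 1`, `b_n = (1/2)(a_n - ∑_{i=1}^{n-1} b_i b_{n-i})` (with `a_k = 0` for `k > m`). -/
def bcoef (m : ℕ) (a : Fin m → ℂ) : ℕ → ℂ
  | 0 => 1
  | n + 1 => (1 / 2) * ((if h : n < m then a ⟨n, h⟩ else 0) -
      ∑ i ∈ (Finset.Ico 1 (n + 1)).attach,
        bcoef m a i.1 * bcoef m a (n + 1 - i.1))
decreasing_by
  all_goals
    have h1 := (Finset.mem_Ico.mp i.2).1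
    have h2 := (Finset.mem_Ico.mp i.2).2
    omega

/-- `r_m(a) := -m/4` for odd `m`, `-m/4 - b_{1+m/2}(a)` for even `m`. -/
def rmC (m : ℕ) (a : Fin m → ℂ) : ℂ :=
  if m % 2 = 1 then -(m : ℂ) / 4 else -(m : ℂ) / 4 - bcoef m a (1 + m / 2)

/-- `S(X, a) = ∑_{k=0}^{⌊(m+1)/2⌋} (2 b_k(a)/(m+2-2k)) X^{(m+2-2k)/2}` at `X = r e^{iθ}`. -/
def Sfun (m : ℕ) (a : Fin m → ℂ) (r θ : ℝ) : ℂ :=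
  ∑ k ∈ Finset.range ((m + 1) / 2 + 1),
    (2 * bcoef m a k / ((m : ℂ) + 2 - 2 * (k : ℂ))) * rayPow r θ (((m : ℂ) + 2 - 2 * (k : ℂ)) / 2)

/-- The potential `X^m + a₁ X^{m-1} + ⋯ + a_m`. -/
def pot (m : ℕ) (a : Fin m → ℂ) (X : ℂ) : ℂ :=
  X ^ m + ∑ k : Fin m, a k * X ^ (m - 1 - (k : ℕ))

/-- `ω_k(a) := (ω^k a₁, ω^{2k} a₂, …, ω^{km} a_m)`. -/
def omAct (m : ℕ) (k : ℤ) (a : Fin m → ℂ) : Fin m → ℂ :=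
  fun j => om m ^ (k * (((j : ℕ) : ℤ) + 1)) * a j

/-- Sibuya's asymptotic characterization of the canonical solution of
`-Φ'' + (X^m + a₁X^{m-1} + ⋯ + a_m)Φ = 0`:
`Φ(re^{iθ}) (re^{iθ})^{-r_m(a)} e^{S(re^{iθ},a)} → 1` for every `|θ| < 3π/(m+2)`. -/
def SibAsymp (m : ℕ) (a : Fin m → ℂ) (Φ : ℂ → ℂ) : Prop :=
  ∀ θ : ℝ, |θ| < 3 * Real.pi / (m + 2) →
    Filter.Tendsto
      (fun r : ℝ => Φ (rayPt r θ) * rayPow r θ (-(rmC m a)) * Complex.exp (Sfun m a r θ))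
      Filter.atTop (nhds 1)

open Topology Asymptotics Set MeasureTheory ComplexConjugate

def wronskian (f g : ℂ → ℂ) (z : ℂ) : ℂ := f z * deriv g z - deriv f z * g z

lemma Differentiable.eq_of_eventually_eq_ofReal {f g : ℂ → ℂ} (hf : Differentiable ℂ f)
    (hg : Differentiable ℂ g) (h : ∀ᶠ x : ℝ in atTop, f x = g x) : f = g := by
  obtain ⟨x₀, hx₀⟩ := eventually_atTop.mp h
  refine (analyticOnNhd_univ_iff_differentiable.mpr hf).eq_of_frequently_eq
    (analyticOnNhd_univ_iff_differentiable.mpr hg) (z₀ := ((x₀ + 1 : ℝ) : ℂ)) ?_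
  have hmap : Tendsto ((↑) : ℝ → ℂ) (𝓝[≠] (x₀ + 1)) (𝓝[≠] ((x₀ + 1 : ℝ) : ℂ)) :=
    tendsto_nhdsWithin_of_tendsto_nhds_of_eventually_within _
      ((continuous_ofReal.tendsto _).mono_left nhdsWithin_le_nhds)
      (eventually_nhdsWithin_of_forall fun x hx => ofReal_injective.ne hx)
  refine hmap.frequently (Eventually.frequently ?_)
  filter_upwards [nhdsWithin_le_nhds (Ioi_mem_nhds (lt_add_one x₀))] with x hx
  exact hx₀ x (le_of_lt hx)

lemma exists_tendsto_ofReal_atTop_of_deriv_isBigO {F : ℂ → ℂ} (hF : Differentiable ℂ F)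
    (hO : (fun x : ℝ => deriv F x) =O[atTop] fun x => Real.exp (-x)) :
    ∃ L, Tendsto (fun x : ℝ => F x) atTop (𝓝 L) := by
  have hexp : IntegrableAtFilter (fun x : ℝ => Real.exp (-x)) atTop :=
    ⟨Ioi 0, Ioi_mem_atTop 0, by simpa using exp_neg_integrableOn_Ioi 0 one_pos⟩
  have hint : IntegrableOn (fun x : ℝ => deriv F x) (Ici 0) :=
    ((hF.deriv.continuous.comp continuous_ofReal).continuousOn.locallyIntegrableOn
      measurableSet_Ici).integrableOn_of_isBigO_atTop hO hexp
  exact ⟨_, tendsto_limUnder_of_hasDerivAt_of_integrableOn_Ioi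
    (fun x _ => (hF x).hasDerivAt.comp_ofReal) (hint.mono_set Ioi_subset_Ici_self)⟩

section Wronskian

variable {V f g : ℂ → ℂ} (hf : Differentiable ℂ f) (hg : Differentiable ℂ g)
  (hfV : ∀ z, deriv (deriv f) z = V z * f z) (hgV : ∀ z, deriv (deriv g) z = V z * g z)
include hf hg hfV hgV

lemma hasDerivAt_wronskian (z : ℂ) : HasDerivAt (wronskian f g) 0 z := by
  have hf' := (hf.deriv z).hasDerivAt
  have hg' := (hg.deriv z).hasDerivAt
  rw [hfV] at hf'
  rw [hgV] at hg'
  exact (((hf z).hasDerivAt.mul hg').sub (hf'.mul (hg z).hasDerivAt)).congr_deriv (by ring)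

lemma wronskian_eq_zero_of_tendsto_zero (hf0 : Tendsto (fun x : ℝ => f x) atTop (𝓝 0))
    (hg0 : Tendsto (fun x : ℝ => g x) atTop (𝓝 0))
    (hf'' : (fun x : ℝ => deriv (deriv f) x) =O[atTop] fun x => Real.exp (-x))
    (hg'' : (fun x : ℝ => deriv (deriv g) x) =O[atTop] fun x => Real.exp (-x)) :
    wronskian f g = 0 := by
  obtain ⟨Lf, hLf⟩ := exists_tendsto_ofReal_atTop_of_deriv_isBigO hf.deriv hf''
  obtain ⟨Lg, hLg⟩ := exists_tendsto_ofReal_atTop_of_deriv_isBigO hg.deriv hg''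
  have hconst (z : ℂ) : wronskian f g z = wronskian f g 0 :=
    is_const_of_deriv_eq_zero
      (fun w => (hasDerivAt_wronskian hf hg hfV hgV w).differentiableAt)
      (fun w => (hasDerivAt_wronskian hf hg hfV hgV w).deriv) z 0
  have hlim : Tendsto (fun x : ℝ => wronskian f g x) atTop (𝓝 0) := by
    simpa [wronskian] using (hf0.mul hLg).sub (hLf.mul hg0)
  funext z
  rw [hconst z]
  exact tendsto_nhds_unique (by simpa only [hconst] using tendsto_const_nhds) hlim

end Wronskian

lemma eq_of_wronskian_eq_zero {f g : ℂ → ℂ} (hf : Differentiable ℂ f) (hg : Differentiable ℂ g)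
    (hW : wronskian f g = 0) (hlim : Tendsto (fun x : ℝ => g x / f x) atTop (𝓝 1)) :
    f = g := by
  obtain ⟨x₀, hx₀⟩ := eventually_atTop.mp <|
    (hlim.eventually_ne one_ne_zero).mono fun x hx (h0 : f x = 0) => hx (by rw [h0, div_zero])
  have hderiv : ∀ x ∈ Ioi x₀, HasDerivAt (fun x : ℝ => g x / f x) 0 x := by
    intro x hx
    refine (((hg x).hasDerivAt.comp_ofReal).div ((hf x).hasDerivAt.comp_ofReal)
      (hx₀ x hx.le)).congr_deriv ?_
    have hWx := congrFun hW x
    simp only [wronskian, Pi.zero_apply] at hWx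
    rw [div_eq_zero_iff]
    exact Or.inl (by linear_combination hWx)
  obtain ⟨c, hc⟩ := isOpen_Ioi.exists_is_const_of_deriv_eq_zero isPreconnected_Ioi
    (fun x hx => (hderiv x hx).differentiableAt.differentiableWithinAt)
    (fun x hx => (hderiv x hx).deriv)
  have hc1 : c = 1 := tendsto_nhds_unique
    (tendsto_const_nhds.congr' ((eventually_gt_atTop x₀).mono fun x hx => (hc x hx).symm)) hlim
  refine hf.eq_of_eventually_eq_ofReal hg ?_
  filter_upwards [eventually_gt_atTop x₀] with x hx
  exact ((div_eq_one_iff_eq (hx₀ x hx.le)).mp (hc1 ▸ hc x hx : g x / f x = 1)).symm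

def sibuyaGauge (m : ℕ) (b : Fin m → ℂ) (r : ℝ) : ℂ :=
  rayPow r 0 (-(rmC m b)) * Complex.exp (Sfun m b r 0)

lemma SibAsymp.tendsto_mul_sibuyaGauge {m : ℕ} {b : Fin m → ℂ} {Φ : ℂ → ℂ}
    (h : SibAsymp m b Φ) : Tendsto (fun r : ℝ => Φ r * sibuyaGauge m b r) atTop (𝓝 1) := by
  have h0 : |(0 : ℝ)| < 3 * π / (m + 2) := by rw [abs_zero]; positivity
  simpa [rayPt, sibuyaGauge, mul_assoc] using h 0 h0

lemma norm_sibuyaGauge (m : ℕ) (b : Fin m → ℂ) (r : ℝ) :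
    ‖sibuyaGauge m b r‖ = Real.exp ((Sfun m b r 0).re - (rmC m b).re * Real.log r) := by
  rw [sibuyaGauge, rayPow, ← Complex.exp_add, Complex.norm_exp]
  simp [sub_eq_neg_add]

lemma rayPow_zero_ofReal {r : ℝ} (hr : 0 < r) (s : ℝ) : rayPow r 0 s = ((r ^ s : ℝ) : ℂ) := by
  rw [rayPow, Real.rpow_def_of_pos hr, ofReal_exp]
  push_cast
  ring_nf

lemma re_Sfun_zero (m : ℕ) (b : Fin m → ℂ) {r : ℝ} (hr : 0 < r) :
    (Sfun m b r 0).re = ∑ k ∈ Finset.range ((m + 1) / 2 + 1),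
      (2 * bcoef m b k / ((m : ℂ) + 2 - 2 * (k : ℂ))).re * r ^ (((m : ℝ) + 2) / 2 - k) := by
  rw [Sfun, re_sum]
  refine Finset.sum_congr rfl fun k _ => ?_
  have hexp : ((m : ℂ) + 2 - 2 * (k : ℂ)) / 2 = ((((m : ℝ) + 2) / 2 - k : ℝ) : ℂ) := by
    push_cast
    ring
  rw [hexp, rayPow_zero_ofReal hr, re_mul_ofReal]

lemma isLittleO_rpow_rpow_atTop {a b : ℝ} (h : a < b) :
    (fun x : ℝ => x ^ a) =o[atTop] fun x => x ^ b := by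
  refine (isLittleO_iff_tendsto' ?_).mpr ?_
  · filter_upwards [eventually_gt_atTop 0] with x hx h0
    exact absurd h0 (Real.rpow_pos_of_pos hx b).ne'
  · refine (tendsto_rpow_neg_atTop (sub_pos.mpr h)).congr' ?_
    filter_upwards [eventually_gt_atTop 0] with x hx
    rw [← Real.rpow_sub hx, neg_sub]

-- The leading term of `Re S(r, b)` is `(2/(m+2)) r^{(m+2)/2}`, which beats `C log r + r`
-- as soon as `m ≥ 1`.
lemma tendsto_re_Sfun_sub {m : ℕ} (hm : 1 ≤ m) (b : Fin m → ℂ) (C : ℝ) :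
    Tendsto (fun r : ℝ => (Sfun m b r 0).re - C * Real.log r - r) atTop atTop := by
  set p : ℝ := ((m : ℝ) + 2) / 2
  have hp : 1 < p := by
    have : (1 : ℝ) ≤ m := by exact_mod_cast hm
    simp only [p]
    linarith
  set c : ℕ → ℝ := fun k => (2 * bcoef m b k / ((m : ℂ) + 2 - 2 * (k : ℂ))).re
  have hc0 : 0 < c 0 := by
    have : ((m : ℂ) + 2 - 2 * ((0 : ℕ) : ℂ)) = (((m : ℝ) + 2 : ℝ) : ℂ) := by push_cast; ring
    simp only [c, bcoef, this, mul_one, div_ofReal_re]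
    norm_num
    positivity
  set w : ℝ → ℝ := fun r =>
    ∑ k ∈ Finset.range ((m + 1) / 2), c (k + 1) * r ^ (p - (k + 1 : ℕ)) - C * Real.log r - r
  have hw : w =o[atTop] fun r => c 0 * r ^ p := by
    refine IsLittleO.const_mul_right' (isUnit_iff_ne_zero.mpr hc0.ne') ?_
    refine ((IsLittleO.fun_sum fun k _ => ?_).sub ?_).sub ?_
    · exact (isLittleO_rpow_rpow_atTop (sub_lt_self _ (by positivity))).const_mul_left _
    · exact (isLittleO_log_rpow_atTop (by linarith)).const_mul_left _
    · simpa using isLittleO_rpow_rpow_atTop hp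
  have hlead : Tendsto (fun r : ℝ => c 0 * r ^ p) atTop atTop :=
    (tendsto_rpow_atTop (by linarith)).const_mul_atTop hc0
  refine (IsEquivalent.refl.add_isLittleO hw).symm.tendsto_atTop hlead |>.congr' ?_
  filter_upwards [eventually_gt_atTop 0] with r hr
  rw [re_Sfun_zero m b hr, Finset.sum_range_succ']
  simp only [Pi.add_apply, w, c, p, Nat.cast_zero, sub_zero]
  ring

lemma isBigO_inv_norm_sibuyaGauge {m : ℕ} (hm : 1 ≤ m) (b : Fin m → ℂ) (k : ℕ) :
    (fun r : ℝ => r ^ k * ‖sibuyaGauge m b r‖⁻¹) =O[atTop] fun r => Real.exp (-r) := by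
  refine IsBigO.of_bound 1 ?_
  filter_upwards [(tendsto_re_Sfun_sub hm b (k + (rmC m b).re)).eventually_ge_atTop 0,
    eventually_gt_atTop 0] with r hS hr
  rw [norm_sibuyaGauge, ← Real.exp_neg, ← Real.rpow_natCast, Real.rpow_def_of_pos hr,
    ← Real.exp_add, one_mul, Real.norm_of_nonneg (by positivity),
    Real.norm_of_nonneg (by positivity), Real.exp_le_exp]
  linarith

lemma isBigO_pot_atTop (m : ℕ) (b : Fin m → ℂ) :
    (fun x : ℝ => pot m b x) =O[atTop] fun x => x ^ m := by
  refine IsBigO.of_bound (1 + ∑ k, ‖b k‖) ?_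
  filter_upwards [eventually_ge_atTop 1] with x hx
  have hnorm (n : ℕ) : ‖(x : ℂ) ^ n‖ = x ^ n := by
    rw [norm_pow, norm_real, Real.norm_of_nonneg (by linarith)]
  rw [Real.norm_of_nonneg (by positivity), add_mul, one_mul, Finset.sum_mul, pot]
  refine (norm_add_le _ _).trans (add_le_add (hnorm m).le ((norm_sum_le _ _).trans ?_))
  refine Finset.sum_le_sum fun k _ => ?_
  rw [norm_mul, hnorm]
  exact mul_le_mul_of_nonneg_left (pow_le_pow_right₀ hx (by omega)) (norm_nonneg _)

lemma sibuyaGauge_ne_zero (m : ℕ) (b : Fin m → ℂ) (r : ℝ) : sibuyaGauge m b r ≠ 0 :=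
  mul_ne_zero (Complex.exp_ne_zero _) (Complex.exp_ne_zero _)

section Decay

variable {m : ℕ} {b : Fin m → ℂ} {f : ℂ → ℂ}

lemma isBigO_of_tendsto_mul_sibuyaGauge
    (hfa : Tendsto (fun r : ℝ => f r * sibuyaGauge m b r) atTop (𝓝 1)) :
    (fun x : ℝ => f x) =O[atTop] fun r => ‖sibuyaGauge m b r‖⁻¹ := by
  have hinv : (fun r => (sibuyaGauge m b r)⁻¹) =O[atTop] fun r => ‖sibuyaGauge m b r‖⁻¹ :=
    isBigO_of_le _ fun r => by simp [norm_inv]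
  refine (((hfa.isBigO_one ℝ).mul hinv).congr_left fun r => ?_).congr_right fun r => one_mul _
  exact mul_inv_cancel_right₀ (sibuyaGauge_ne_zero m b r) _

variable (hm : 1 ≤ m) (hfa : Tendsto (fun r : ℝ => f r * sibuyaGauge m b r) atTop (𝓝 1))
include hm hfa

lemma tendsto_zero_of_tendsto_mul_sibuyaGauge : Tendsto (fun x : ℝ => f x) atTop (𝓝 0) :=
  ((isBigO_of_tendsto_mul_sibuyaGauge hfa).trans
    (by simpa using isBigO_inv_norm_sibuyaGauge hm b 0)).trans_tendsto
    tendsto_exp_neg_atTop_nhds_zero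

lemma isBigO_pot_mul_of_tendsto_mul_sibuyaGauge :
    (fun x : ℝ => pot m b x * f x) =O[atTop] fun r => Real.exp (-r) :=
  ((isBigO_pot_atTop m b).mul (isBigO_of_tendsto_mul_sibuyaGauge hfa)).trans
    (isBigO_inv_norm_sibuyaGauge hm b m)

end Decay

lemma eq_of_tendsto_mul_sibuyaGauge {m : ℕ} (hm : 1 ≤ m) {b : Fin m → ℂ} {f g : ℂ → ℂ}
    (hf : Differentiable ℂ f) (hg : Differentiable ℂ g)
    (hfV : ∀ z, deriv (deriv f) z = pot m b z * f z)
    (hgV : ∀ z, deriv (deriv g) z = pot m b z * g z)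
    (hfa : Tendsto (fun r : ℝ => f r * sibuyaGauge m b r) atTop (𝓝 1))
    (hga : Tendsto (fun r : ℝ => g r * sibuyaGauge m b r) atTop (𝓝 1)) : f = g := by
  have hW : wronskian f g = 0 := wronskian_eq_zero_of_tendsto_zero hf hg hfV hgV
    (tendsto_zero_of_tendsto_mul_sibuyaGauge hm hfa)
    (tendsto_zero_of_tendsto_mul_sibuyaGauge hm hga)
    (by simpa only [hfV] using isBigO_pot_mul_of_tendsto_mul_sibuyaGauge hm hfa)
    (by simpa only [hgV] using isBigO_pot_mul_of_tendsto_mul_sibuyaGauge hm hga)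
  refine eq_of_wronskian_eq_zero hf hg hW ?_
  refine (div_one (1 : ℂ) ▸ hga.div hfa one_ne_zero).congr fun r => ?_
  exact mul_div_mul_right _ _ (sibuyaGauge_ne_zero m b r)

lemma bcoef_conj (m : ℕ) (a : Fin m → ℂ) (n : ℕ) :
    bcoef m (fun j => conj (a j)) n = conj (bcoef m a n) := by
  induction n using Nat.strong_induction_on with
  | _ n ih =>
    match n with
    | 0 => simp [bcoef]
    | n + 1 =>
      rw [bcoef, bcoef, map_mul, map_sub, map_sum]
      congr 2
      · simp [Complex.conj_ofNat]
      · split <;> simp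
      · refine Finset.sum_congr rfl fun i _ => ?_
        have hi := Finset.mem_Ico.mp i.2
        rw [map_mul, ih i.1 (by omega), ih (n + 1 - i.1) (by omega)]

lemma rmC_conj (m : ℕ) (a : Fin m → ℂ) : rmC m (fun j => conj (a j)) = conj (rmC m a) := by
  rw [rmC, rmC, bcoef_conj]
  split <;> simp [map_div₀, Complex.conj_ofNat]

lemma Sfun_conj (m : ℕ) (a : Fin m → ℂ) (r : ℝ) :
    Sfun m (fun j => conj (a j)) r 0 = conj (Sfun m a r 0) := by
  simp only [Sfun, rayPow, map_sum, map_mul, map_div₀, ← Complex.exp_conj, bcoef_conj,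
    map_sub, map_add, map_natCast, Complex.conj_ofNat, conj_ofReal, ofReal_zero, zero_mul, map_zero]

lemma conj_sibuyaGauge (m : ℕ) (a : Fin m → ℂ) (r : ℝ) :
    conj (sibuyaGauge m a r) = sibuyaGauge m (fun j => conj (a j)) r := by
  simp only [sibuyaGauge, rayPow, map_mul, ← Complex.exp_conj, Sfun_conj, rmC_conj, map_neg,
    map_add, conj_ofReal, ofReal_zero, zero_mul, map_zero]

lemma conj_pot (m : ℕ) (a : Fin m → ℂ) (X : ℂ) :
    conj (pot m a X) = pot m (fun j => conj (a j)) (conj X) := by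
  simp only [pot, map_add, map_sum, map_mul, map_pow]

lemma conj_comp_conj_eq_of_sibAsymp {m : ℕ} (hm : 1 ≤ m) {c : Fin m → ℂ} {F G : ℂ → ℂ}
    (hF : Differentiable ℂ F) (hG : Differentiable ℂ G)
    (hFV : ∀ z, deriv (deriv F) z = pot m c z * F z)
    (hGV : ∀ z, deriv (deriv G) z = pot m (fun j => conj (c j)) z * G z)
    (hFa : SibAsymp m c F) (hGa : SibAsymp m (fun j => conj (c j)) G) :
    conj ∘ F ∘ conj = G := by
  refine eq_of_tendsto_mul_sibuyaGauge hm (fun z => differentiableAt_conj_conj_iff.mpr (hF _)) hG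
    (fun z => ?_) hGV ?_ hGa.tendsto_mul_sibuyaGauge
  · simp [hFV, conj_pot]
  · simpa [Function.comp_def, conj_sibuyaGauge] using
      (continuous_conj.tendsto 1).comp hFa.tendsto_mul_sibuyaGauge

lemma conj_apply_of_sibAsymp {m : ℕ} (hm : 1 ≤ m) {Φ₀ : ℂ × (Fin m → ℂ) → ℂ}
    (hent : Differentiable ℂ Φ₀)
    (hode : ∀ a : Fin m → ℂ, ∀ X : ℂ,
      -(deriv (deriv fun Y => Φ₀ (Y, a)) X) + pot m a X * Φ₀ (X, a) = 0)
    (hasym : ∀ a : Fin m → ℂ, SibAsymp m a fun X => Φ₀ (X, a)) (Z : ℂ) (c : Fin m → ℂ) :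
    conj (Φ₀ (Z, c)) = Φ₀ (conj Z, fun j => conj (c j)) := by
  have hslice (a : Fin m → ℂ) : Differentiable ℂ fun Y => Φ₀ (Y, a) :=
    hent.comp (differentiable_id.prodMk (differentiable_const a))
  have hV (a : Fin m → ℂ) (X : ℂ) :
      deriv (deriv fun Y => Φ₀ (Y, a)) X = pot m a X * Φ₀ (X, a) := by
    linear_combination -hode a X
  simpa using congrFun (conj_comp_conj_eq_of_sibAsymp hm (hslice c) (hslice _) (hV c) (hV _)
    (hasym c) (hasym _)) (conj Z)

lemma conj_om (m : ℕ) : conj (om m) = (om m)⁻¹ := by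
  rw [om, ← Complex.exp_conj, ← Complex.exp_neg]
  simp [map_div₀, Complex.conj_ofNat, neg_div]

lemma conj_omPow (m : ℕ) (s : ℂ) : conj (omPow m s) = omPow m (-conj s) := by
  rw [omPow, omPow, ← Complex.exp_conj]
  simp [map_div₀, Complex.conj_ofNat]
  ring_nf

lemma conj_omAct (m : ℕ) (k : ℤ) (a : Fin m → ℂ) :
    (fun j => conj (omAct m k a j)) = omAct m (-k) fun j => conj (a j) := by
  funext j
  simp [omAct, map_zpow₀, conj_om, inv_zpow', neg_mul]

/-- for real coefficients `a ∈ ℝ^m`, the number `-i·C(a)` is real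
(equivalently, `C(a)` is purely imaginary). -/
theorem stmt7 (m : ℕ) (hm : 1 ≤ m)
    (Φ₀ : ℂ × (Fin m → ℂ) → ℂ)
    (hent : Differentiable ℂ Φ₀)
    (hode : ∀ a : Fin m → ℂ, ∀ X : ℂ,
      -(deriv (deriv fun Y => Φ₀ (Y, a)) X) + pot m a X * Φ₀ (X, a) = 0)
    (hasym : ∀ a : Fin m → ℂ, SibAsymp m a fun X => Φ₀ (X, a))
    (C : (Fin m → ℂ) → ℂ)
    (hC : ∀ (X : ℂ) (a : Fin m → ℂ),
      omPow m ((m : ℂ) / 2 + rmC m a) * Φ₀ (om m * X, omAct m 1 a) =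
        C a * Φ₀ (X, a) +
          omPow m (-((m : ℂ) / 2) - rmC m a) * Φ₀ ((om m)⁻¹ * X, omAct m (-1) a))
    (a : Fin m → ℂ) (ha : ∀ j, (a j).im = 0) :
    ∃ t : ℝ, -Complex.I * C a = (t : ℂ) := by
  have hsym := conj_apply_of_sibAsymp hm hent hode hasym
  have ha' : (fun j => conj (a j)) = a := funext fun j => conj_eq_iff_im.mpr (ha j)
  set s := (m : ℂ) / 2 + rmC m a
  have hs : conj s = s := by simp [s, ← rmC_conj, ha', map_div₀, Complex.conj_ofNat]
  have hC' (X : ℂ) : omPow m s * Φ₀ (om m * X, omAct m 1 a) =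
      C a * Φ₀ (X, a) + omPow m (-s) * Φ₀ ((om m)⁻¹ * X, omAct m (-1) a) := by
    rw [hC X a, neg_add']
  have hre (X : ℂ) : (2 * (C a).re : ℝ) * Φ₀ (X, a) = 0 := by
    have h := congrArg conj (hC' (conj X))
    simp only [map_add, map_mul, map_neg, map_inv₀, hsym, conj_omPow, conj_om, conj_conj,
      conj_omAct, ha', neg_neg, inv_inv, hs] at h
    rw [← add_conj]
    linear_combination -hC' X - h
  obtain ⟨x, hx⟩ := ((hasym a).tendsto_mul_sibuyaGauge.eventually_ne one_ne_zero).exists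
  have hCre : (C a).re = 0 := by
    simpa using (mul_eq_zero.mp (hre x)).resolve_right (left_ne_zero_of_mul hx)
  exact ⟨(C a).im, by apply Complex.ext <;> simp [hCre]⟩
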